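/- The double coset $K_\mathbb{C} c_{\beta_2} B$ is contained in the closure (in $G_\mathbb{C}$) of the double coset $K_\mathbb{C} c_\delta B$. (Remark 3.3, second inclusion: $S_5 \subset S_{10}^{cl}$.) -/

import Mathlib

/-!
Put `N = E₃₂ + E₄₁`. For every `e ≠ 0` there are explicit `k(e) ∈ K_ℂ` and `b(e) ∈ B` with
`k(e) c_δ b(e) = (1 + eN) c_{β₂}`; letting `e → 0` puts `c_{β₂}` in the closure of `K_ℂ c_δ B`.
Since `K_ℂ` and `B` are closed under multiplication and multiplication is continuous, that closure
is stable under `K_ℂ` on the left and `B` on the right, so it contains all of `K_ℂ c_{β₂} B`.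
-/

open Matrix

noncomputable section

/-- 4×4 complex matrices. -/
abbrev M4 : Type := Matrix (Fin 4) (Fin 4) ℂ

/-- The standard symplectic form matrix `J = [[0, -I₂],[I₂, 0]]`. -/
def Jmat : M4 := !![0, 0, -1, 0; 0, 0, 0, -1; 1, 0, 0, 0; 0, 1, 0, 0]

/-- `G_ℂ = Sp(2,ℂ) = {g ∈ GL(4,ℂ) : ᵗg J g = J}`. -/
def GC : Set M4 := {g | IsUnit g ∧ gᵀ * Jmat * g = Jmat}

/-- `K_ℂ = {diag(g, ᵗg⁻¹) : g ∈ GL(2,ℂ)}`. -/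
def KC : Set M4 :=
  {m | ∃ g : Matrix (Fin 2) (Fin 2) ℂ, IsUnit g ∧
    m = !![g 0 0, g 0 1, 0, 0;
           g 1 0, g 1 1, 0, 0;
           0, 0, (gᵀ)⁻¹ 0 0, (gᵀ)⁻¹ 0 1;
           0, 0, (gᵀ)⁻¹ 1 0, (gᵀ)⁻¹ 1 1]}

/-- The Hermitian form of signature (2,2): `(w,z) = w̄₁z₁ + w̄₂z₂ - w̄₃z₃ - w̄₄z₄`. -/
def hermForm (w z : Fin 4 → ℂ) : ℂ :=
  star (w 0) * z 0 + star (w 1) * z 1 - star (w 2) * z 2 - star (w 3) * z 3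

/-- `G_ℝ = G_ℂ ∩ U(2,2)`. -/
def GR : Set M4 :=
  {g | g ∈ GC ∧ ∀ w z : Fin 4 → ℂ, hermForm (g.mulVec w) (g.mulVec z) = hermForm w z}

/-- The standard basis vectors of `ℂ⁴`. -/
def stdVec (i : Fin 4) : Fin 4 → ℂ := Pi.single i 1

/-- `U₊ = ℂe₁ ⊕ ℂe₂`. -/
def Uplus : Submodule ℂ (Fin 4 → ℂ) := Submodule.span ℂ {stdVec 0, stdVec 1}

/-- `U₋ = ℂe₃ ⊕ ℂe₄`. -/
def Uminus : Submodule ℂ (Fin 4 → ℂ) := Submodule.span ℂ {stdVec 2, stdVec 3}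

/-- The line `ℂe₁`. -/
def line1 : Submodule ℂ (Fin 4 → ℂ) := Submodule.span ℂ {stdVec 0}

/-- `Q = {g ∈ G_ℂ : g U₊ = U₊}`. -/
def Qpar : Set M4 := {g | g ∈ GC ∧ Uplus.map g.mulVecLin = Uplus}

/-- `Q̄ = {g ∈ G_ℂ : g U₋ = U₋}`. -/
def Qbar : Set M4 := {g | g ∈ GC ∧ Uminus.map g.mulVecLin = Uminus}

/-- The Borel subgroup `B = {g ∈ G_ℂ : g ℂe₁ = ℂe₁, g U₊ = U₊}`. -/
def Bor : Set M4 :=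
  {g | g ∈ GC ∧ line1.map g.mulVecLin = line1 ∧ Uplus.map g.mulVecLin = Uplus}

/-- `t₁(s) = exp s(E₃₁ - E₁₃)`. -/
def t1 (s : ℝ) : M4 :=
  !![(Real.cos s : ℂ), 0, (-(Real.sin s) : ℂ), 0;
     0, 1, 0, 0;
     ((Real.sin s : ℝ) : ℂ), 0, (Real.cos s : ℂ), 0;
     0, 0, 0, 1]

/-- `t₂(s) = exp s(E₄₂ - E₂₄)`. -/
def t2 (s : ℝ) : M4 :=
  !![1, 0, 0, 0;
     0, (Real.cos s : ℂ), 0, (-(Real.sin s) : ℂ);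
     0, 0, 1, 0;
     0, ((Real.sin s : ℝ) : ℂ), 0, (Real.cos s : ℂ)]

def cb1 : M4 := t1 (Real.pi / 4)
def cb2 : M4 := t2 (Real.pi / 4)
def wb1 : M4 := t1 (Real.pi / 2)
def wb2 : M4 := t2 (Real.pi / 2)

/-- `c_δ = (1/√2) · [[1,0,0,-1],[0,1,-1,0],[0,1,1,0],[1,0,0,1]]`. -/
def cdelta : M4 :=
  ((Real.sqrt 2 : ℂ))⁻¹ • !![1, 0, 0, -1; 0, 1, -1, 0; 0, 1, 1, 0; 1, 0, 0, 1]

/-- The double coset `A g C = {a g c : a ∈ A, c ∈ C}`. -/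
def dc (A : Set M4) (g : M4) (C : Set M4) : Set M4 :=
  {m | ∃ a ∈ A, ∃ c ∈ C, m = a * g * c}

open Filter Topology

theorem dc_subset_closure_of_mem_closure {A C : Set M4} (hA : ∀ a ∈ A, ∀ a' ∈ A, a * a' ∈ A)
    (hC : ∀ c ∈ C, ∀ c' ∈ C, c * c' ∈ C) {g h : M4} (hg : g ∈ closure (dc A h C)) :
    dc A g C ⊆ closure (dc A h C) := by
  rintro _ ⟨a, ha, c, hc, rfl⟩
  have hmaps : Set.MapsTo (fun m => a * m * c) (dc A h C) (dc A h C) := by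
    rintro _ ⟨a', ha', c', hc', rfl⟩
    exact ⟨a * a', hA a ha a' ha', c' * c, hC c' hc' c hc, by noncomm_ring⟩
  exact map_mem_closure (f := fun m => a * m * c) (by fun_prop) hg hmaps

theorem span_pair_smul_smul_add {K V : Type*} [Field K] [AddCommGroup V] [Module K V]
    {a c : K} (ha : a ≠ 0) (hc : c ≠ 0) (b : K) (x y : V) :
    Submodule.span K {a • x, b • x + c • y} = Submodule.span K {x, y} := by
  apply le_antisymm <;> rw [Submodule.span_le, Set.insert_subset_iff, Set.singleton_subset_iff] <;>
    refine ⟨Submodule.mem_span_pair.2 ?_, Submodule.mem_span_pair.2 ?_⟩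
  · exact ⟨a, 0, by simp⟩
  · exact ⟨b, c, by simp⟩
  · exact ⟨a⁻¹, 0, by simp [smul_smul, ha]⟩
  · refine ⟨-(c⁻¹ * b * a⁻¹), c⁻¹, ?_⟩
    match_scalars <;> field_simp
    ring

theorem isUnit_of_transpose_mul_mul_eq {n R : Type*} [Fintype n] [DecidableEq n] [CommRing R]
    {J g : Matrix n n R} (hJ : IsUnit J) (h : gᵀ * J * g = J) : IsUnit g := by
  rw [Matrix.isUnit_iff_isUnit_det] at hJ ⊢
  have hdet : g.det * g.det * J.det = 1 * J.det := by
    simpa [Matrix.det_transpose, mul_comm, mul_left_comm] using congrArg Matrix.det h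
  exact IsUnit.of_mul_eq_one g.det (hJ.mul_right_cancel hdet)

theorem isUnit_Jmat : IsUnit Jmat := by
  refine IsUnit.of_mul_eq_one (-Jmat) ?_
  ext i j
  fin_cases i <;> fin_cases j <;> simp [Jmat, Matrix.mul_apply, Fin.sum_univ_four]

theorem mem_GC_of_symplectic {g : M4} (h : gᵀ * Jmat * g = Jmat) : g ∈ GC :=
  ⟨isUnit_of_transpose_mul_mul_eq isUnit_Jmat h, h⟩

theorem mul_mem_GC {a b : M4} (ha : a ∈ GC) (hb : b ∈ GC) : a * b ∈ GC := by
  refine ⟨ha.1.mul hb.1, ?_⟩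
  calc (a * b)ᵀ * Jmat * (a * b) = bᵀ * (aᵀ * Jmat * a) * b := by
        rw [Matrix.transpose_mul]; noncomm_ring
    _ = Jmat := by rw [ha.2, hb.2]

theorem mul_mem_Bor {a b : M4} (ha : a ∈ Bor) (hb : b ∈ Bor) : a * b ∈ Bor :=
  ⟨mul_mem_GC ha.1 hb.1,
    by rw [Matrix.mulVecLin_mul, Submodule.map_comp, hb.2.1, ha.2.1],
    by rw [Matrix.mulVecLin_mul, Submodule.map_comp, hb.2.2, ha.2.2]⟩

theorem mul_mem_KC {a b : M4} (ha : a ∈ KC) (hb : b ∈ KC) : a * b ∈ KC := by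
  obtain ⟨g, hg, rfl⟩ := ha
  obtain ⟨g', hg', rfl⟩ := hb
  refine ⟨g * g', hg.mul hg', ?_⟩
  rw [Matrix.transpose_mul, Matrix.mul_inv_rev]
  ext i j
  fin_cases i <;> fin_cases j <;>
    simp [Matrix.mul_apply, Fin.sum_univ_four, Fin.sum_univ_two]

theorem ofReal_sqrt_two_sq : ((√2 : ℝ) : ℂ) ^ 2 = 2 := by
  exact_mod_cast Real.sq_sqrt zero_le_two

def nLower : M4 := !![0, 0, 0, 0; 0, 0, 0, 0; 0, 1, 0, 0; 1, 0, 0, 0]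

def kApprox (e : ℂ) : M4 :=
  !![-1 / (2 * e ^ 2), 1, 0, 0;
     0, -2 * e, 0, 0;
     0, 0, -2 * e ^ 2, 0;
     0, 0, -e, -1 / (2 * e)]

def bApprox (e : ℂ) : M4 :=
  !![-2 * √2 * e ^ 2, -e, √2 / 2, -e;
     0, -1 / (2 * e), -√2 / (4 * e ^ 2), 1 / (2 * e);
     0, 0, -√2 / (4 * e ^ 2), 0;
     0, 0, √2 / 2, -2 * e]

theorem kApprox_mul_cdelta_mul_bApprox {e : ℂ} (he : e ≠ 0) :
    kApprox e * cdelta * bApprox e = (1 + e • nLower) * cb2 := by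
  have hs := ofReal_sqrt_two_sq
  ext i j
  fin_cases i <;> fin_cases j <;>
    simp [kApprox, bApprox, nLower, cdelta, cb2, t2, Matrix.mul_apply, Fin.sum_univ_four,
      Real.cos_pi_div_four, Real.sin_pi_div_four, Matrix.one_apply] <;>
    field_simp <;> grind

theorem bApprox_symplectic {e : ℂ} (he : e ≠ 0) : (bApprox e)ᵀ * Jmat * bApprox e = Jmat := by
  have hs := ofReal_sqrt_two_sq
  ext i j
  fin_cases i <;> fin_cases j <;>
    simp [bApprox, Jmat, Matrix.mul_apply, Fin.sum_univ_four] <;>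
    field_simp <;> grind

theorem kApprox_mem_KC {e : ℂ} (he : e ≠ 0) : kApprox e ∈ KC := by
  refine ⟨!![-1 / (2 * e ^ 2), 1; 0, -2 * e], ?_, ?_⟩
  · rw [Matrix.isUnit_iff_isUnit_det, Matrix.det_fin_two_of, isUnit_iff_ne_zero]
    field_simp
    simp [he]
  · have hinv : (!![-1 / (2 * e ^ 2), 1; 0, -2 * e]ᵀ)⁻¹ = !![-2 * e ^ 2, 0; -e, -1 / (2 * e)] := by
      refine Matrix.inv_eq_right_inv ?_
      ext i j
      fin_cases i <;> fin_cases j <;> simp [Matrix.mul_apply, Fin.sum_univ_two, field]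
    rw [hinv]
    ext i j
    fin_cases i <;> fin_cases j <;> simp [kApprox]

theorem bApprox_mem_Bor {e : ℂ} (he : e ≠ 0) : bApprox e ∈ Bor := by
  have hs0 : ((√2 : ℝ) : ℂ) ≠ 0 := by exact_mod_cast (Real.sqrt_pos.2 two_pos).ne'
  have hcol0 : (bApprox e).mulVecLin (stdVec 0) = (-2 * √2 * e ^ 2) • stdVec 0 := by
    ext i; fin_cases i <;> simp [bApprox, stdVec]
  have hcol1 : (bApprox e).mulVecLin (stdVec 1) = (-e) • stdVec 0 + (-1 / (2 * e)) • stdVec 1 := by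
    ext i; fin_cases i <;> simp [bApprox, stdVec]
  have h0 : (-2 * √2 * e ^ 2 : ℂ) ≠ 0 := by simp [he, hs0]
  refine ⟨mem_GC_of_symplectic (bApprox_symplectic he), ?_, ?_⟩
  · rw [line1, Submodule.map_span, Set.image_singleton, hcol0]
    exact Submodule.span_singleton_smul_eq (isUnit_iff_ne_zero.2 h0) _
  · rw [Uplus, Submodule.map_span, Set.image_pair, hcol0, hcol1]
    exact span_pair_smul_smul_add h0 (by simp [he]) _ _ _

theorem cb2_mem_closure_dc_cdelta : cb2 ∈ closure (dc KC cdelta Bor) := by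
  have hlim : Tendsto (fun e : ℂ => (1 + e • nLower) * cb2) (𝓝[≠] 0) (𝓝 cb2) := by
    have hcont : Continuous (fun e : ℂ => (1 + e • nLower) * cb2) := by fun_prop
    simpa using (hcont.tendsto 0).mono_left nhdsWithin_le_nhds
  refine mem_closure_of_tendsto hlim (eventually_nhdsWithin_of_forall fun e he => ?_)
  exact ⟨kApprox e, kApprox_mem_KC he, bApprox e, bApprox_mem_Bor he,
    (kApprox_mul_cdelta_mul_bApprox he).symm⟩

/-- Remark 3.3, second inclusion: `K_ℂ c_{β₂} B ⊆ cl(K_ℂ c_δ B)`,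
i.e. `S₅ ⊆ S₁₀^cl`. -/
theorem stmt_6 : dc KC cb2 Bor ⊆ closure (dc KC cdelta Bor) :=
  dc_subset_closure_of_mem_closure (fun _ ha _ hb => mul_mem_KC ha hb)
    (fun _ ha _ hb => mul_mem_Bor ha hb) cb2_mem_closure_dc_cdelta
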